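/- arXiv:2507.21674 — 2 statements merged into one kernel-verified Lean document; each statement's English description precedes it below -/
import Mathlib

section
/- Let n ≥ 1, let J ∈ 𝕊, let a = (a₁,…,aₙ) ∈ ℂ_Jⁿ, and let P ∈ ℍ[q₁,…,qₙ]. Then P has a zero on the arranged spherical set 𝕊_a if and only if its regular conjugate P^c has a zero on 𝕊_a, and this happens if and only if the symmetrization P^s vanishes identically on 𝕊_a. -/
/-!
For `g ≠ 0` and `a` with pairwise commuting components, `P(g⁻¹ a g) = g⁻¹ T_P(g)`, where
`T_P(g) = ∑ₘ aᵐ g cₘ` is an `ℝ`-linear endomorphism of `ℍ` with `T_{P*Q} = T_Q ∘ T_P`; so `P` has a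
zero on `𝕊_a` iff `T_P` has a nontrivial kernel. As `P^s` has real coefficients, `T_{P^s}` is right
multiplication by `T_{P^s}(1)`, and `T_{P^s} = T_{P^c} ∘ T_P`. If `T_P` is injective it is onto, so
`T_{P^s}(1) = 0` would force `T_{P^c} = 0`, hence `T_P = 0`: summing `e c e` over the basis
`e = 1, i, j, k` gives `-2 c̄`, which recovers `T_{P^c}` from `T_P` and vice versa. Applying this
to `P^c`, whose symmetrization is `P^c * P`, makes the statement symmetric in `P` and `P^c`.
-/

open scoped Quaternion

noncomputable section

/-- The quaternions. -/
abbrev ℍq : Type := Quaternion ℝ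

/-- Slice regular polynomials in `n` quaternionic variables: formal polynomials with
quaternionic coefficients written on the right, with the slice (convolution) product. -/
abbrev SP (n : ℕ) : Type := AddMonoidAlgebra ℍq (Fin n →₀ ℕ)

/-- Right ideals of `SP n`. -/
abbrev RIdeal (n : ℕ) := Submodule (SP n)ᵐᵒᵖ (SP n)

/-- Evaluation of a slice regular polynomial at a point of `ℍⁿ`:
`P(p) = ∑ p₁^{ℓ₁} ⋯ pₙ^{ℓₙ} a_{ℓ₁,…,ℓₙ}`. -/
def peval {n : ℕ} (p : Fin n → ℍq) (P : SP n) : ℍq :=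
  Finsupp.sum P.coeff fun m a => (List.ofFn fun i => p i ^ m i).prod * a

/-- The regular conjugate `P^c`. -/
def rconj {n : ℕ} (P : SP n) : SP n :=
  AddMonoidAlgebra.ofCoeff (Finsupp.mapRange (star : ℍq → ℍq) (star_zero _) P.coeff)

/-- The symmetrization `P^s = P * P^c`. -/
def symzn {n : ℕ} (P : SP n) : SP n := P * rconj P

/-- The sphere `𝕊` of quaternionic imaginary units. -/
def QSph : Set ℍq := {J | J ^ 2 = -1}

/-- The slice `ℂ_K = ℝ + ℝK`. -/
def CSlice (K : ℍq) : Set ℍq := {q | ∃ x y : ℝ, q = (x : ℍq) + (y : ℍq) * K}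

/-- The points of `ℍⁿ` lying in some slice `ℂ_Kⁿ` (points with commuting components). -/
def commSlice (n : ℕ) : Set (Fin n → ℍq) := {p | ∃ K ∈ QSph, ∀ i, p i ∈ CSlice K}

/-- The common zero set `V(I)` of a right ideal. -/
def Vq {n : ℕ} (I : RIdeal n) : Set (Fin n → ℍq) := {p | ∀ P ∈ I, peval p P = 0}

/-- `V_c(I) = V(I) ∩ ⋃_{K ∈ 𝕊} ℂ_Kⁿ`. -/
def Vc {n : ℕ} (I : RIdeal n) : Set (Fin n → ℍq) := Vq I ∩ commSlice n

/-- The spherical set `𝕊_a` of a point `a ∈ ℍⁿ`. -/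
def SphSet {n : ℕ} (a : Fin n → ℍq) : Set (Fin n → ℍq) :=
  {p | ∃ g : ℍq, g ≠ 0 ∧ ∀ i, p i = g⁻¹ * a i * g}

/-- The symmetrization `𝕊_Z = ⋃_{a ∈ Z} 𝕊_a` of a subset of `ℍⁿ`. -/
def SymmSet {n : ℕ} (Z : Set (Fin n → ℍq)) : Set (Fin n → ℍq) := ⋃ a ∈ Z, SphSet a

/-- `J(Z)`: the right ideal generated by the polynomials vanishing identically on `Z`. -/
def Jq {n : ℕ} (Z : Set (Fin n → ℍq)) : RIdeal n :=
  Submodule.span (SP n)ᵐᵒᵖ {P | ∀ p ∈ Z, peval p P = 0}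

/-- A right ideal is completely prime if `P*Q ∈ I` and `P*I ⊆ I` imply `P ∈ I` or `Q ∈ I`. -/
def CompletelyPrime {n : ℕ} (I : RIdeal n) : Prop :=
  ∀ P Q : SP n, P * Q ∈ I → (∀ R ∈ I, P * R ∈ I) → P ∈ I ∨ Q ∈ I

/-- The radical `√I`: the intersection of all completely prime right ideals containing `I`. -/
def radq {n : ℕ} (I : RIdeal n) : RIdeal n :=
  sInf {J : RIdeal n | CompletelyPrime J ∧ I ≤ J}

/-- A right ideal is quasi prime if `P*Q ∈ I` implies `P ∈ I` or `Q^s ∈ I`. -/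
def QuasiPrime {n : ℕ} (I : RIdeal n) : Prop :=
  ∀ P Q : SP n, P * Q ∈ I → P ∈ I ∨ symzn Q ∈ I

/-- A right ideal is two-sided if it is also closed under left multiplication. -/
def IsTwoSidedIdl {n : ℕ} (I : RIdeal n) : Prop :=
  ∀ P : SP n, ∀ Q ∈ I, P * Q ∈ I

/-- The symmetrized ideal `S(I)`: the right ideal generated by `{P^s : P ∈ I}`. -/
def SIdl {n : ℕ} (I : RIdeal n) : RIdeal n :=
  Submodule.span (SP n)ᵐᵒᵖ {Q | ∃ P ∈ I, Q = symzn P}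

/-- The product `I₁ * I₂`: the right ideal generated by `{P*Q : P ∈ I₁, Q ∈ I₂}`. -/
def prodIdl {n : ℕ} (I₁ I₂ : RIdeal n) : RIdeal n :=
  Submodule.span (SP n)ᵐᵒᵖ {x | ∃ P ∈ I₁, ∃ Q ∈ I₂, x = P * Q}

/-- Reducibility of the slice algebraic set `V_c(I)`. -/
def VcReducible {n : ℕ} (I : RIdeal n) : Prop :=
  ∃ I₁ I₂ : RIdeal n, I₁ ≠ ⊥ ∧ I₁ ≠ ⊤ ∧ I₂ ≠ ⊥ ∧ I₂ ≠ ⊤ ∧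
    ¬ I₁ ≤ I₂ ∧ ¬ I₂ ≤ I₁ ∧ Vc I = Vc I₁ ∪ Vc I₂

/-- Reducibility of the slice algebraic set `V(I)`. -/
def VReducible {n : ℕ} (I : RIdeal n) : Prop :=
  ∃ I₁ I₂ : RIdeal n, I₁ ≠ ⊥ ∧ I₁ ≠ ⊤ ∧ I₂ ≠ ⊥ ∧ I₂ ≠ ⊤ ∧
    ¬ I₁ ≤ I₂ ∧ ¬ I₂ ≤ I₁ ∧ Vq I = Vq I₁ ∪ Vq I₂

/-- An irreducible slice regular polynomial. -/
def IrredPoly {n : ℕ} (H : SP n) : Prop :=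
  H ≠ 0 ∧ ¬ IsUnit H ∧ ∀ P Q : SP n, H = P * Q → IsUnit P ∨ IsUnit Q

/-- The variable `q_i` as a slice regular polynomial. -/
def Xq {n : ℕ} (i : Fin n) : SP n := AddMonoidAlgebra.single (Finsupp.single i 1) 1

/-- A constant polynomial. -/
def Cq {n : ℕ} (a : ℍq) : SP n := AddMonoidAlgebra.single 0 a

/-- A polynomial has real coefficients. -/
def RealCoeffs {n : ℕ} (P : SP n) : Prop := ∀ m : Fin n →₀ ℕ, ∃ r : ℝ, P.coeff m = (r : ℍq)

section MonomialValue

variable {R : Type*} {n : ℕ}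

def monomialValue [Monoid R] (a : Fin n → R) (m : Fin n →₀ ℕ) : R :=
  (List.ofFn fun i => a i ^ m i).prod

open scoped IsMulCommutative in
theorem monomialValue_add [Monoid R] {a : Fin n → R} (ha : ∀ i j, Commute (a i) (a j))
    (k l : Fin n →₀ ℕ) : monomialValue a (k + l) = monomialValue a k * monomialValue a l := by
  let S := Submonoid.closure (Set.range a)
  have : IsMulCommutative S := Submonoid.isMulCommutative_closure _ <| by
    rintro _ ⟨i, rfl⟩ _ ⟨j, rfl⟩
    exact (ha i j).eq
  let b : Fin n → S := fun i => ⟨a i, Submonoid.subset_closure ⟨i, rfl⟩⟩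
  have hb : ∀ m, monomialValue a m = ((∏ i, b i ^ m i : S) : R) := fun m => by
    rw [← List.prod_ofFn, Submonoid.coe_list_prod, List.map_ofFn]
    rfl
  simp only [hb, Finsupp.add_apply, pow_add, Finset.prod_mul_distrib, Submonoid.coe_mul]

theorem monomialValue_conj [GroupWithZero R] (a : Fin n → R) {g : R} (hg : g ≠ 0)
    (m : Fin n →₀ ℕ) :
    monomialValue (fun i => g⁻¹ * a i * g) m = g⁻¹ * monomialValue a m * g := by
  let φ := MulDistribMulAction.toMonoidHom R (ConjAct.toConjAct (Units.mk0 g hg)⁻¹)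
  have hφ : ∀ x, φ x = g⁻¹ * x * g := fun x => by
    simp [φ, ConjAct.units_smul_def]
  have hpow : (fun i => (g⁻¹ * a i * g) ^ m i) = fun i => φ (a i ^ m i) :=
    funext fun i => by rw [map_pow, hφ]
  rw [← hφ, monomialValue, monomialValue, hpow, map_list_prod, List.map_ofFn]
  rfl

end MonomialValue

theorem commute_of_mem_cSlice {J p q : ℍq} (hp : p ∈ CSlice J) (hq : q ∈ CSlice J) :
    Commute p q := by
  obtain ⟨x, y, rfl⟩ := hp
  obtain ⟨u, v, rfl⟩ := hq
  have hJ : Commute ((x : ℍq) + y * J) J :=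
    (Quaternion.coe_commute x J).add_left ((Quaternion.coe_commute y J).mul_left (.refl J))
  exact (Quaternion.coe_commute u _).symm.add_right
    ((Quaternion.coe_commute v _).symm.mul_right hJ)

def quatBasis : Fin 4 → ℍq := ![1, ⟨0, 1, 0, 0⟩, ⟨0, 0, 1, 0⟩, ⟨0, 0, 0, 1⟩]

theorem sum_quatBasis_mul_mul (c : ℍq) :
    ∑ t, quatBasis t * c * quatBasis t = (-2 : ℝ) • star c := by
  simp only [Fin.sum_univ_four, quatBasis]
  ext <;> simp only [Quaternion.re_mul, Quaternion.imI_mul, Quaternion.imJ_mul, Quaternion.imK_mul,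
    Quaternion.re_add, Quaternion.imI_add, Quaternion.imJ_add, Quaternion.imK_add] <;>
    simp [two_mul]

section RegularConjugate

variable {n : ℕ}

@[simp]
theorem coeff_rconj (P : SP n) (m : Fin n →₀ ℕ) : (rconj P).coeff m = star (P.coeff m) := rfl

theorem rconj_rconj (P : SP n) : rconj (rconj P) = P :=
  AddMonoidAlgebra.ext <| Finsupp.ext fun m => by simp

theorem rconj_add (P Q : SP n) : rconj (P + Q) = rconj P + rconj Q :=
  AddMonoidAlgebra.ext <| Finsupp.ext fun m => by simp

theorem rconj_single (m : Fin n →₀ ℕ) (c : ℍq) :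
    rconj (AddMonoidAlgebra.single m c) = AddMonoidAlgebra.single m (star c) :=
  AddMonoidAlgebra.ext <| Finsupp.ext fun k => by
    simp [AddMonoidAlgebra.coeff_single, Finsupp.single_apply, apply_ite star]

theorem rconj_mul (P Q : SP n) : rconj (P * Q) = rconj Q * rconj P := by
  induction P using AddMonoidAlgebra.induction_linear with
  | zero => simp [rconj]
  | add P₁ P₂ h₁ h₂ => rw [add_mul, rconj_add, rconj_add, h₁, h₂, mul_add]
  | single k b =>
    induction Q using AddMonoidAlgebra.induction_linear with
    | zero => simp [rconj]
    | add Q₁ Q₂ h₁ h₂ => rw [mul_add, rconj_add, rconj_add, h₁, h₂, add_mul]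
    | single l c =>
      rw [AddMonoidAlgebra.single_mul_single, rconj_single, rconj_single, rconj_single,
        AddMonoidAlgebra.single_mul_single, star_mul, add_comm]

theorem realCoeffs_symzn (P : SP n) : RealCoeffs (symzn P) := fun m =>
  have h : rconj (symzn P) = symzn P := by rw [symzn, rconj_mul, rconj_rconj]
  ⟨_, Quaternion.star_eq_self.mp (by rw [← coeff_rconj, h])⟩

end RegularConjugate

section SliceOperator

variable {n : ℕ} (M : (Fin n →₀ ℕ) → ℍq)

def sliceOp (P : SP n) : ℍq →ₗ[ℝ] ℍq :=
  P.coeff.sum fun m c => LinearMap.mulLeftRight ℝ (M m, c)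

theorem sliceOp_apply (P : SP n) (g : ℍq) :
    sliceOp M P g = P.coeff.sum fun m c => M m * g * c := by
  simp [sliceOp, Finsupp.sum, LinearMap.sum_apply]

theorem sliceOp_zero : sliceOp M (0 : SP n) = 0 := by
  simp [sliceOp]

theorem sliceOp_add (P Q : SP n) : sliceOp M (P + Q) = sliceOp M P + sliceOp M Q := by
  ext g : 1
  simp only [sliceOp_apply, LinearMap.add_apply, AddMonoidAlgebra.coeff_add]
  exact Finsupp.sum_add_index' (fun _ => by simp) fun _ _ _ => mul_add _ _ _

theorem sliceOp_single (m : Fin n →₀ ℕ) (c g : ℍq) :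
    sliceOp M (AddMonoidAlgebra.single m c) g = M m * g * c := by
  simp [sliceOp_apply, AddMonoidAlgebra.coeff_single]

theorem sliceOp_mul {M : (Fin n →₀ ℕ) → ℍq} (hM : ∀ k l, M (k + l) = M k * M l) (P Q : SP n) :
    sliceOp M (P * Q) = sliceOp M Q ∘ₗ sliceOp M P := by
  induction P using AddMonoidAlgebra.induction_linear with
  | zero => simp [sliceOp_zero]
  | add P₁ P₂ h₁ h₂ => rw [add_mul, sliceOp_add, sliceOp_add, h₁, h₂, LinearMap.comp_add]
  | single k b =>
    induction Q using AddMonoidAlgebra.induction_linear with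
    | zero => simp [sliceOp_zero]
    | add Q₁ Q₂ h₁ h₂ => rw [mul_add, sliceOp_add, sliceOp_add, h₁, h₂, LinearMap.add_comp]
    | single l c =>
      ext g : 1
      -- `M` is multiplicative on a commutative monoid, so its values commute
      have hcomm : M (k + l) = M l * M k := by rw [add_comm, hM]
      simp only [AddMonoidAlgebra.single_mul_single, sliceOp_single, LinearMap.comp_apply, hcomm,
        mul_assoc]

theorem sliceOp_apply_of_realCoeffs {P : SP n} (hP : RealCoeffs P) (g : ℍq) :
    sliceOp M P g = sliceOp M P 1 * g := by
  simp only [sliceOp_apply, Finsupp.sum_mul, mul_one]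
  refine Finsupp.sum_congr fun m _ => ?_
  obtain ⟨r, hr⟩ := hP m
  rw [hr, mul_assoc, mul_assoc, Quaternion.coe_commutes]

theorem sliceOp_rconj_apply (P : SP n) (g : ℍq) :
    sliceOp M (rconj P) g = P.coeff.sum fun m c => M m * g * star c :=
  (sliceOp_apply M _ g).trans <| Finsupp.sum_mapRange_index (hf := star_zero _) fun _ => mul_zero _

theorem sum_sliceOp_mul_quatBasis (P : SP n) (g : ℍq) :
    ∑ t, sliceOp M P (g * quatBasis t) * quatBasis t = (-2 : ℝ) • sliceOp M (rconj P) g := by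
  rw [sliceOp_rconj_apply]
  simp only [sliceOp_apply, Finsupp.sum_mul]
  simp only [Finsupp.sum, Finset.smul_sum]
  rw [Finset.sum_comm]
  refine Finset.sum_congr rfl fun m _ => ?_
  calc ∑ t, M m * (g * quatBasis t) * P.coeff m * quatBasis t
      = M m * g * ∑ t, quatBasis t * P.coeff m * quatBasis t := by
        simp only [Finset.mul_sum, mul_assoc]
    _ = _ := by rw [sum_quatBasis_mul_mul, mul_smul_comm]

theorem sliceOp_rconj_eq_zero {P : SP n} (hP : sliceOp M P = 0) : sliceOp M (rconj P) = 0 := by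
  ext g : 1
  have h := sum_sliceOp_mul_quatBasis M P g
  simp only [hP, LinearMap.zero_apply, zero_mul, Finset.sum_const_zero] at h
  exact (smul_eq_zero.mp h.symm).resolve_left (by norm_num)

end SliceOperator

section Kernel

variable {n : ℕ} {M : (Fin n →₀ ℕ) → ℍq}

theorem sliceOp_surjective {P : SP n} (hP : ∀ g ≠ 0, sliceOp M P g ≠ 0) :
    Function.Surjective (sliceOp M P) :=
  LinearMap.injective_iff_surjective.mp <|
    (injective_iff_map_eq_zero _).mpr fun g hg => not_imp_not.mp (hP g) hg

theorem exists_sliceOp_eq_zero_iff (hM : ∀ k l, M (k + l) = M k * M l) (P : SP n) :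
    (∃ g ≠ 0, sliceOp M P g = 0) ↔ sliceOp M (symzn P) 1 = 0 := by
  have hsymm : ∀ g, sliceOp M (rconj P) (sliceOp M P g) = sliceOp M (symzn P) 1 * g := fun g => by
    rw [← sliceOp_apply_of_realCoeffs M (realCoeffs_symzn P), symzn, sliceOp_mul hM,
      LinearMap.comp_apply]
  constructor
  · rintro ⟨g, hg, hPg⟩
    simpa [hPg, hg] using hsymm g
  · intro h1
    by_contra! hinj
    have hc : sliceOp M (rconj P) = 0 := LinearMap.ext fun h => by
      obtain ⟨g, rfl⟩ := sliceOp_surjective hinj h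
      rw [hsymm, h1, zero_mul, LinearMap.zero_apply]
    have h0 := sliceOp_rconj_eq_zero M hc
    rw [rconj_rconj] at h0
    exact hinj 1 one_ne_zero (by rw [h0, LinearMap.zero_apply])

theorem exists_sliceOp_rconj_eq_zero (hM : ∀ k l, M (k + l) = M k * M l) {P : SP n}
    (hP : ∃ g ≠ 0, sliceOp M P g = 0) : ∃ g ≠ 0, sliceOp M (rconj P) g = 0 := by
  obtain ⟨g, hg, hPg⟩ := hP
  by_contra! hinj
  obtain ⟨h, rfl⟩ := sliceOp_surjective hinj g
  have hh : h ≠ 0 := by rintro rfl; simp at hg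
  -- `P^c * P` is the symmetrization of `P^c`
  have : sliceOp M (symzn (rconj P)) h = 0 := by
    rw [symzn, rconj_rconj, sliceOp_mul hM, LinearMap.comp_apply, hPg]
  rw [sliceOp_apply_of_realCoeffs M (realCoeffs_symzn _), mul_eq_zero, or_iff_left hh] at this
  obtain ⟨g', hg', hg'0⟩ := (exists_sliceOp_eq_zero_iff hM (rconj P)).mpr this
  exact hinj g' hg' hg'0

end Kernel

section SphericalSet

variable {n : ℕ}

theorem peval_conj (a : Fin n → ℍq) {g : ℍq} (hg : g ≠ 0) (P : SP n) :
    peval (fun i => g⁻¹ * a i * g) P = g⁻¹ * sliceOp (monomialValue a) P g := by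
  rw [sliceOp_apply, Finsupp.mul_sum]
  refine Finsupp.sum_congr fun m _ => ?_
  rw [← monomialValue, monomialValue_conj a hg, mul_assoc, mul_assoc, mul_assoc]

theorem exists_mem_sphSet_peval_eq_zero_iff (a : Fin n → ℍq) (P : SP n) :
    (∃ p ∈ SphSet a, peval p P = 0) ↔ ∃ g ≠ 0, sliceOp (monomialValue a) P g = 0 := by
  constructor
  · rintro ⟨p, ⟨g, hg, hp⟩, hP⟩
    rw [funext hp, peval_conj a hg, mul_eq_zero, or_iff_right (inv_ne_zero hg)] at hP
    exact ⟨g, hg, hP⟩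
  · rintro ⟨g, hg, hP⟩
    exact ⟨_, ⟨g, hg, fun _ => rfl⟩, by rw [peval_conj a hg, hP, mul_zero]⟩

theorem forall_mem_sphSet_peval_symzn_eq_zero_iff (a : Fin n → ℍq) (P : SP n) :
    (∀ p ∈ SphSet a, peval p (symzn P) = 0) ↔ sliceOp (monomialValue a) (symzn P) 1 = 0 := by
  constructor
  · intro h
    have h1 := h _ ⟨1, one_ne_zero, fun i => rfl⟩
    rwa [peval_conj a one_ne_zero, inv_one, one_mul] at h1
  · rintro h p ⟨g, hg, hp⟩
    rw [funext hp, peval_conj a hg, sliceOp_apply_of_realCoeffs _ (realCoeffs_symzn P), h,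
      zero_mul, mul_zero]

end SphericalSet

theorem stmt0_general {n : ℕ} (J : ℍq)
    (a : Fin n → ℍq) (ha : ∀ i, a i ∈ CSlice J) (P : SP n) :
    ((∃ p ∈ SphSet a, peval p P = 0) ↔ (∃ p ∈ SphSet a, peval p (rconj P) = 0)) ∧
    ((∃ p ∈ SphSet a, peval p P = 0) ↔ (∀ p ∈ SphSet a, peval p (symzn P) = 0)) := by
  have hM := monomialValue_add fun i j => commute_of_mem_cSlice (ha i) (ha j)
  simp only [exists_mem_sphSet_peval_eq_zero_iff, forall_mem_sphSet_peval_symzn_eq_zero_iff]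
  refine ⟨⟨exists_sliceOp_rconj_eq_zero hM, fun h => ?_⟩, exists_sliceOp_eq_zero_iff hM P⟩
  simpa only [rconj_rconj] using exists_sliceOp_rconj_eq_zero hM h

/-- For `a ∈ ℂ_Jⁿ`, `P` has a zero on the arranged spherical set `𝕊_a`
iff `P^c` has a zero on `𝕊_a`, iff `P^s` vanishes identically on `𝕊_a`. -/
theorem stmt0 {n : ℕ} (hn : 1 ≤ n) (J : ℍq) (hJ : J ∈ QSph)
    (a : Fin n → ℍq) (ha : ∀ i, a i ∈ CSlice J) (P : SP n) :
    ((∃ p ∈ SphSet a, peval p P = 0) ↔ (∃ p ∈ SphSet a, peval p (rconj P) = 0)) ∧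
    ((∃ p ∈ SphSet a, peval p P = 0) ↔ (∀ p ∈ SphSet a, peval p (symzn P) = 0)) :=
  stmt0_general J a ha P

end
end

section
/- Let I₁, I₂ be right ideals of ℍ[q₁,…,qₙ] such that I₂ is generated by finitely many polynomials G₁,…,G_m all of whose coefficients are real. Then V_c(I₁ ∩ I₂) = V_c(I₁ * I₂) = V_c(I₁) ∪ V_c(I₂). -/
open scoped Quaternion

noncomputable section

/-!
Polynomials with real coefficients are central in `SP n`, so `I₂` is a two-sided ideal and
`I₁ * I₂ ⊆ I₁ ∩ I₂`; this gives `V_c(I₁) ∪ V_c(I₂) ⊆ V_c(I₁ ∩ I₂) ⊆ V_c(I₁ * I₂)`. Conversely, at a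
point `p` with commuting components a real polynomial `G` satisfies `(P * G)(p) = G(p) P(p)`. So if
`p ∈ V_c(I₁ * I₂)` and some generator `G` of `I₂` does not vanish at `p`, every `P ∈ I₁` vanishes
at `p`; otherwise all of `I₂` vanishes at `p`.
-/

open MulOpposite

theorem List.prod_ofFn_mul_of_commute {M : Type*} [Monoid M] :
    ∀ {k : ℕ} (f g : Fin k → M), (∀ i j, Commute (g i) (f j)) →
      (List.ofFn fun i => f i * g i).prod = (List.ofFn f).prod * (List.ofFn g).prod
  | 0, _, _, _ => by simp
  | k + 1, f, g, h => by
    have hg₀ : Commute (g 0) (List.ofFn fun i => f i.succ).prod :=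
      Commute.list_prod_right _ _ fun x hx => by
        obtain ⟨i, rfl⟩ := List.mem_ofFn.1 hx
        exact h 0 i.succ
    simp only [List.ofFn_succ, List.prod_cons]
    rw [List.prod_ofFn_mul_of_commute _ _ fun i j => h _ _, mul_assoc, ← mul_assoc (g 0),
      hg₀.eq, mul_assoc, mul_assoc]

theorem commute_of_mem_CSlice {K a b : ℍq} (ha : a ∈ CSlice K) (hb : b ∈ CSlice K) :
    Commute a b := by
  obtain ⟨x, y, rfl⟩ := ha
  obtain ⟨x', y', rfl⟩ := hb
  refine (Quaternion.coe_commute x _).add_left (.add_right (Quaternion.coe_commute x' _).symm ?_)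
  exact (Quaternion.coe_commute y _).mul_left
    ((Quaternion.coe_commute y' K).symm.mul_right (.refl K))

theorem commute_of_mem_commSlice {n : ℕ} {p : Fin n → ℍq} (hp : p ∈ commSlice n) (i j : Fin n) :
    Commute (p i) (p j) := by
  obtain ⟨K, -, hK⟩ := hp
  exact commute_of_mem_CSlice (hK i) (hK j)

theorem Vc_antitone {n : ℕ} {I J : RIdeal n} (h : I ≤ J) : Vc J ⊆ Vc I :=
  fun _ ⟨hz, hp⟩ => ⟨fun P hP => hz P (h hP), hp⟩

theorem RealCoeffs.induction {n : ℕ} {motive : SP n → Prop} (zero : motive 0)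
    (add : ∀ P Q, motive P → motive Q → motive (P + Q))
    (single : ∀ ℓ (r : ℝ), motive (AddMonoidAlgebra.single ℓ (r : ℍq)))
    {G : SP n} (hG : RealCoeffs G) : motive G := by
  rw [← AddMonoidAlgebra.sum_coeff_single G]
  refine Finset.sum_induction _ motive add zero fun ℓ _ => ?_
  obtain ⟨r, hr⟩ := hG ℓ
  rw [hr]
  exact single ℓ r

theorem RealCoeffs.commute {n : ℕ} {G : SP n} (hG : RealCoeffs G) (P : SP n) : Commute G P :=
  hG.induction (motive := fun G => Commute G P) (.zero_left P) (fun _ _ => .add_left)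
    fun _ r => AddMonoidAlgebra.single_commute (fun _ => .all _ _) (Quaternion.coe_commute r) P

namespace SP

variable {n : ℕ}

def evalMonomial (p : Fin n → ℍq) (ℓ : Fin n →₀ ℕ) : ℍq := (List.ofFn fun i => p i ^ ℓ i).prod

theorem evalMonomial_add {p : Fin n → ℍq} (hp : ∀ i j, Commute (p i) (p j)) (k l : Fin n →₀ ℕ) :
    evalMonomial p (k + l) = evalMonomial p k * evalMonomial p l := by
  simp only [evalMonomial, Finsupp.add_apply, pow_add]
  exact List.prod_ofFn_mul_of_commute _ _ fun i j => (hp i j).pow_pow _ _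

@[simp]
theorem peval_zero (p : Fin n → ℍq) : peval p 0 = 0 :=
  Finsupp.sum_zero_index

@[simp]
theorem peval_add (p : Fin n → ℍq) (P Q : SP n) : peval p (P + Q) = peval p P + peval p Q :=
  Finsupp.sum_add_index' (fun _ => mul_zero _) fun _ _ _ => mul_add _ _ _

theorem peval_single (p : Fin n → ℍq) (ℓ : Fin n →₀ ℕ) (a : ℍq) :
    peval p (AddMonoidAlgebra.single ℓ a) = evalMonomial p ℓ * a := by
  unfold peval
  rw [AddMonoidAlgebra.coeff_single]
  exact Finsupp.sum_single_index (mul_zero _)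

theorem peval_single_real_mul {p : Fin n → ℍq} (hp : ∀ i j, Commute (p i) (p j))
    (k : Fin n →₀ ℕ) (r : ℝ) (R : SP n) :
    peval p (AddMonoidAlgebra.single k (r : ℍq) * R) =
      peval p (AddMonoidAlgebra.single k (r : ℍq)) * peval p R := by
  induction R using AddMonoidAlgebra.induction_linear with
  | zero => simp
  | add P Q hP hQ => simp [mul_add, hP, hQ]
  | single l b =>
    rw [AddMonoidAlgebra.single_mul_single, peval_single, peval_single, peval_single,
      evalMonomial_add hp, mul_assoc, mul_assoc, (Quaternion.coe_commute r _).left_comm]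

theorem peval_real_mul {p : Fin n → ℍq} (hp : ∀ i j, Commute (p i) (p j))
    {G : SP n} (hG : RealCoeffs G) (R : SP n) :
    peval p (G * R) = peval p G * peval p R :=
  hG.induction (motive := fun G => peval p (G * R) = peval p G * peval p R) (by simp)
    (fun P Q hP hQ => by simp [add_mul, hP, hQ]) fun k r => peval_single_real_mul hp k r R

end SP

section Ideals

variable {n : ℕ}

theorem isTwoSidedIdl_span_of_commute {S : Set (SP n)} (hS : ∀ s ∈ S, ∀ P, Commute s P) :
    IsTwoSidedIdl (Submodule.span (SP n)ᵐᵒᵖ S) := by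
  intro P Q hQ
  induction hQ using Submodule.span_induction with
  | mem s hs =>
    rw [← (hS s hs P).eq]
    exact Submodule.smul_mem _ (op P) (Submodule.subset_span hs)
  | zero => rw [mul_zero]; exact zero_mem _
  | add _ _ _ _ hx hy => rw [mul_add]; exact add_mem hx hy
  | smul c _ _ hx => rw [smul_eq_mul_unop, ← mul_assoc]; exact Submodule.smul_mem _ c hx

theorem prodIdl_le_inf (I₁ : RIdeal n) {I₂ : RIdeal n} (h : IsTwoSidedIdl I₂) :
    prodIdl I₁ I₂ ≤ I₁ ⊓ I₂ :=
  Submodule.span_le.2 <| by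
    rintro _ ⟨P, hP, Q, hQ, rfl⟩
    exact ⟨I₁.smul_mem (op Q) hP, h P Q hQ⟩

theorem peval_eq_zero_of_mem_span {p : Fin n → ℍq} (hp : ∀ i j, Commute (p i) (p j))
    {S : Set (SP n)} (hS : ∀ s ∈ S, RealCoeffs s) (hS₀ : ∀ s ∈ S, peval p s = 0)
    {Q : SP n} (hQ : Q ∈ Submodule.span (SP n)ᵐᵒᵖ S) : peval p Q = 0 := by
  obtain ⟨k, c, s, rfl⟩ := Submodule.mem_span_set'.1 hQ
  refine Finset.sum_induction _ (fun Q => peval p Q = 0)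
    (fun _ _ h₁ h₂ => by rw [SP.peval_add, h₁, h₂, add_zero]) (SP.peval_zero p) fun i _ => ?_
  rw [smul_eq_mul_unop, SP.peval_real_mul hp (hS _ (s i).2), hS₀ _ (s i).2, zero_mul]

theorem Vc_prodIdl_span_subset (I : RIdeal n) {S : Set (SP n)} (hS : ∀ s ∈ S, RealCoeffs s) :
    Vc (prodIdl I (Submodule.span (SP n)ᵐᵒᵖ S)) ⊆ Vc I ∪ Vc (Submodule.span (SP n)ᵐᵒᵖ S) := by
  rintro p ⟨hz, hpc⟩
  have hp := commute_of_mem_commSlice hpc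
  by_cases hS₀ : ∀ s ∈ S, peval p s = 0
  · exact Or.inr ⟨fun Q hQ => peval_eq_zero_of_mem_span hp hS hS₀ hQ, hpc⟩
  push Not at hS₀
  obtain ⟨s, hs, hs₀⟩ := hS₀
  refine Or.inl ⟨fun P hP => ?_, hpc⟩
  have hPs := hz (P * s) (Submodule.subset_span ⟨P, hP, s, Submodule.subset_span hs, rfl⟩)
  rw [← ((hS s hs).commute P).eq, SP.peval_real_mul hp (hS s hs), mul_eq_zero] at hPs
  exact hPs.resolve_left hs₀

end Ideals

/-- If `I₂` is generated by finitely many polynomials with real coefficients,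
then `V_c(I₁ ∩ I₂) = V_c(I₁ * I₂) = V_c(I₁) ∪ V_c(I₂)`. -/
theorem stmt5 {n m : ℕ} (I₁ I₂ : RIdeal n) (G : Fin m → SP n)
    (hG : ∀ j, RealCoeffs (G j))
    (hI₂ : I₂ = Submodule.span (SP n)ᵐᵒᵖ (Set.range G)) :
    Vc (I₁ ⊓ I₂) = Vc (prodIdl I₁ I₂) ∧ Vc (prodIdl I₁ I₂) = Vc I₁ ∪ Vc I₂ := by
  have hreal : ∀ s ∈ Set.range G, RealCoeffs s := by
    rintro _ ⟨j, rfl⟩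
    exact hG j
  subst hI₂
  have hprod_le := prodIdl_le_inf I₁
    (isTwoSidedIdl_span_of_commute fun s hs => (hreal s hs).commute)
  have hprod_sub := Vc_prodIdl_span_subset I₁ hreal
  have hunion_sub : Vc I₁ ∪ Vc (Submodule.span (SP n)ᵐᵒᵖ (Set.range G)) ⊆ Vc (I₁ ⊓ _) :=
    Set.union_subset (Vc_antitone inf_le_left) (Vc_antitone inf_le_right)
  exact ⟨(Vc_antitone hprod_le).antisymm (hprod_sub.trans hunion_sub),
    hprod_sub.antisymm (hunion_sub.trans (Vc_antitone hprod_le))⟩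

end
end
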